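/- For λ ≠ 0 with iλz and -iλ̄z̄ off the branch cut, the ∂̄-derivative of g^r with respect to λ̄ equals ∂g^r/∂λ̄ = (1/(16πλ̄)) X(z,λ) + (iz̄/(16π)) X(z,λ) 𝒢(λ) - (1/(16π))(1 + X(z,λ)) ∂𝒢/∂λ̄. -/

import Mathlib

open scoped Real

/-- The Euler–Mascheroni constant γ = -∫₀^∞ e^{-x} ln x dx. -/
noncomputable def gammaE : ℝ := -∫ x in Set.Ioi (0 : ℝ), Real.exp (-x) * Real.log x

/-- Ei(z) = γ + ln(-z) + ∑_{n=1}^∞ z^n/(n·n!), principal branch of log. -/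
noncomputable def Ei (z : ℂ) : ℂ :=
  (gammaE : ℂ) + Complex.log (-z) +
    ∑' n : ℕ, z ^ (n + 1) / (((n : ℂ) + 1) * (Nat.factorial (n + 1) : ℂ))

/-- The continuous extension of Ei(z) + Ei(z̄):
2γ + 2 ln|z| + ∑_{n=1}^∞ (z^n + z̄^n)/(n·n!). -/
noncomputable def EiSum (w : ℂ) : ℂ :=
  2 * (gammaE : ℂ) + 2 * (Real.log ‖w‖ : ℂ) +
    ∑' n : ℕ, (w ^ (n + 1) + ((starRingEnd ℂ) w) ^ (n + 1)) /
      (((n : ℂ) + 1) * (Nat.factorial (n + 1) : ℂ))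


/-- X(z,λ) = e^{-iλz - iλ̄z̄}. -/
noncomputable def Xf (z l : ℂ) : ℂ :=
  Complex.exp (-Complex.I * l * z - Complex.I * (starRingEnd ℂ) l * (starRingEnd ℂ) z)

/-- 𝒢(λ) = (1/4)(e^{-iλ} + e^{iλ̄})(Ei(iλ) + Ei(-iλ̄)), via the continuous extension. -/
noncomputable def Gf (l : ℂ) : ℂ :=
  (1 / 4) * (Complex.exp (-Complex.I * l) + Complex.exp (Complex.I * (starRingEnd ℂ) l)) *
    EiSum (Complex.I * l)

/-- The regularized Green's function g^r(z,λ). -/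
noncomputable def grE (z l : ℂ) : ℂ :=
  (1 / (16 * (Real.pi : ℂ))) * Complex.exp (-Complex.I * l * z) * EiSum (Complex.I * l * z) -
    (1 / (16 * (Real.pi : ℂ))) * (1 + Xf z l) * Gf l

/-- z is off the branch cut ℝ₊ ∪ {0}. -/
def offCut (z : ℂ) : Prop := ¬ (z.im = 0 ∧ 0 ≤ z.re)

/-!
Write `∂` and `∂̄` for the Wirtinger derivatives in `λ`. For `w ≠ 0`,
`EiSum w = 2γ + 2 log |w| + h w + h w̄` with `h' w = (eʷ - 1) / w`, so `EiSum` has `∂`-derivative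
`eʷ / w` and `∂̄`-derivative `e^w̄ / w̄`. By the chain rule, `λ ↦ e^{-iλz} EiSum (iλz)` then has
`∂̄`-derivative `e^{-iλz} e^{-iλ̄z̄} / λ̄ = X / λ̄`, while `∂̄X = -iz̄X`. For a real derivative
`δ ↦ aδ + bδ̄`, the combination `(f'(1) + i f'(i)) / 2` of the derivatives along the two
coordinate lines is exactly `b`.
-/

open Complex ComplexConjugate

noncomputable def eiSeries (w : ℂ) : ℂ :=
  ∑' n : ℕ, w ^ (n + 1) / (((n : ℂ) + 1) * (Nat.factorial (n + 1) : ℂ))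

noncomputable def eiSeriesDeriv (w : ℂ) : ℂ := ∑' n : ℕ, w ^ n / (Nat.factorial (n + 1) : ℂ)

lemma summable_eiSeries_term (w : ℂ) :
    Summable fun n : ℕ => w ^ (n + 1) / (((n : ℂ) + 1) * (Nat.factorial (n + 1) : ℂ)) := by
  refine Summable.of_norm_bounded ((Real.summable_pow_div_factorial ‖w‖).mul_left ‖w‖) fun n => ?_
  have hle : n.factorial ≤ (n + 1) * (n + 1).factorial :=
    (Nat.factorial_le n.le_succ).trans (Nat.le_mul_of_pos_left _ n.succ_pos)
  rw [norm_div, norm_pow, norm_mul, ← Nat.cast_succ, norm_natCast, norm_natCast, pow_succ',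
    mul_div_assoc]
  gcongr
  exact_mod_cast hle

lemma norm_eiSeriesDeriv_term_le (w : ℂ) (n : ℕ) :
    ‖w ^ n / (Nat.factorial (n + 1) : ℂ)‖ ≤ ‖w‖ ^ n / Nat.factorial n := by
  rw [norm_div, norm_pow, norm_natCast]
  gcongr
  exact n.le_succ

lemma hasDerivAt_eiSeries (w : ℂ) : HasDerivAt eiSeries (eiSeriesDeriv w) w := by
  have hw : w ∈ Metric.ball (0 : ℂ) (‖w‖ + 1) := by simp
  unfold eiSeries eiSeriesDeriv
  refine hasDerivAt_tsum_of_isPreconnected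
    (g' := fun (n : ℕ) (y : ℂ) => y ^ n / (Nat.factorial (n + 1) : ℂ))
    (Real.summable_pow_div_factorial (‖w‖ + 1)) Metric.isOpen_ball
    (convex_ball _ _).isPreconnected (fun n y _ => ?_) (fun n y hy => ?_)
    (Metric.mem_ball_self (by positivity)) (by simp) hw
  · have hn : ((n : ℂ) + 1) ≠ 0 := Nat.cast_add_one_ne_zero n
    refine ((hasDerivAt_pow (n + 1) y).div_const
      (((n : ℂ) + 1) * (Nat.factorial (n + 1) : ℂ))).congr_deriv ?_
    rw [add_tsub_cancel_right, Nat.cast_succ, mul_div_mul_left _ _ hn]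
  · refine (norm_eiSeriesDeriv_term_le y n).trans ?_
    gcongr
    exact (mem_ball_zero_iff.mp hy).le

lemma mul_eiSeriesDeriv (w : ℂ) : w * eiSeriesDeriv w = cexp w - 1 := by
  have hexp : HasSum (fun n : ℕ => w ^ n / (Nat.factorial n : ℂ)) (cexp w) := by
    rw [exp_eq_exp_ℂ]
    exact NormedSpace.expSeries_div_hasSum_exp w
  rw [eiSeriesDeriv, ← tsum_mul_left]
  simpa [pow_succ', mul_div_assoc] using ((hasSum_nat_add_iff' 1).mpr hexp).tsum_eq

lemma eiSeriesDeriv_eq {w : ℂ} (hw : w ≠ 0) : eiSeriesDeriv w = (cexp w - 1) / w := by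
  rw [eq_div_iff hw, mul_comm, mul_eiSeriesDeriv]

lemma EiSum_eq (w : ℂ) :
    EiSum w = 2 * (gammaE : ℂ) + 2 * (Real.log ‖w‖ : ℂ) + (eiSeries w + eiSeries (conj w)) := by
  rw [EiSum, eiSeries, eiSeries,
    ← (summable_eiSeries_term w).tsum_add (summable_eiSeries_term (conj w))]
  simp only [add_div]

/-- The real-linear map `δ ↦ a δ + b δ̄`: the real derivative of a function with `∂f = a`,
`∂̄f = b`. -/
noncomputable def wirtingerCLM (a b : ℂ) : ℂ →L[ℝ] ℂ :=
  a • ContinuousLinearMap.id ℝ ℂ + b • conjCLE.toContinuousLinearMap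

@[simp]
lemma wirtingerCLM_apply (a b δ : ℂ) : wirtingerCLM a b δ = a * δ + b * conj δ := rfl

lemma HasDerivAt.hasFDerivAt_wirtingerCLM {f : ℂ → ℂ} {a w : ℂ} (h : HasDerivAt f a w) :
    HasFDerivAt f (wirtingerCLM a 0) w :=
  (h.hasFDerivAt.restrictScalars ℝ).congr_fderiv <|
    ContinuousLinearMap.ext fun δ => by simp [mul_comm]

lemma HasDerivAt.hasFDerivAt_comp_conj {f : ℂ → ℂ} {b w : ℂ} (h : HasDerivAt f b (conj w)) :
    HasFDerivAt (fun w => f (conj w)) (wirtingerCLM 0 b) w :=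
  ((h.hasFDerivAt.restrictScalars ℝ).comp w conjCLE.hasFDerivAt).congr_fderiv <|
    ContinuousLinearMap.ext fun δ => by simp [mul_comm]

lemma HasFDerivAt.comp_const_mul_wirtingerCLM {f : ℂ → ℂ} {a b c w : ℂ}
    (h : HasFDerivAt f (wirtingerCLM a b) (c * w)) :
    HasFDerivAt (fun w => f (c * w)) (wirtingerCLM (a * c) (b * conj c)) w := by
  have hc : HasFDerivAt (fun w => c * w) (wirtingerCLM c 0) w :=
    ((hasDerivAt_id' w).const_mul c).hasFDerivAt_wirtingerCLM.congr_fderiv (by simp)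
  exact (h.comp w hc).congr_fderiv <| ContinuousLinearMap.ext fun δ => by simp; ring

lemma hasFDerivAt_two_mul_log_norm {w : ℂ} (hw : w ≠ 0) :
    HasFDerivAt (fun w : ℂ => 2 * (Real.log ‖w‖ : ℂ)) (wirtingerCLM w⁻¹ (conj w)⁻¹) w := by
  have h := ofRealCLM.hasFDerivAt.comp w
    ((hasStrictFDerivAt_norm_sq w).hasFDerivAt.log (by simpa using hw))
  have hfun : (fun w : ℂ => 2 * (Real.log ‖w‖ : ℂ)) = ofRealCLM ∘ fun w => Real.log (‖w‖ ^ 2) := by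
    funext w
    simp [Real.log_pow]
  rw [hfun]
  refine h.congr_fderiv (ContinuousLinearMap.ext fun δ => ?_)
  have hw' : conj w ≠ 0 := by simpa using hw
  have hinner : ((2 * inner ℝ w δ : ℝ) : ℂ) = δ * conj w + conj δ * w := by
    rw [Complex.inner, ofReal_mul, re_eq_add_conj, map_mul, conj_conj]
    push_cast
    ring
  have hnorm : ((‖w‖ ^ 2 : ℝ) : ℂ) = w * conj w := by
    rw [mul_conj']
    push_cast
    rfl
  simp only [ContinuousLinearMap.comp_apply, FunLike.coe_smul, Pi.smul_apply, innerSL_apply_apply,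
    ofRealCLM_apply, smul_eq_mul]
  rw [nsmul_eq_mul, Nat.cast_ofNat, ofReal_mul, hinner, ofReal_inv, hnorm, wirtingerCLM_apply]
  field_simp

lemma hasFDerivAt_EiSum {w : ℂ} (hw : w ≠ 0) :
    HasFDerivAt EiSum (wirtingerCLM (cexp w / w) (cexp (conj w) / conj w)) w := by
  have hw' : conj w ≠ 0 := by simpa using hw
  have h := ((hasFDerivAt_two_mul_log_norm hw).const_add (2 * (gammaE : ℂ))).fun_add
    ((hasDerivAt_eiSeries w).hasFDerivAt_wirtingerCLM.fun_add
      (hasDerivAt_eiSeries (conj w)).hasFDerivAt_comp_conj)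
  rw [funext EiSum_eq]
  refine h.congr_fderiv <| ContinuousLinearMap.ext fun δ => ?_
  simp only [FunLike.coe_add, Pi.add_apply, wirtingerCLM_apply, eiSeriesDeriv_eq hw,
    eiSeriesDeriv_eq hw']
  field_simp
  ring

lemma Xf_eq_exp_mul_exp (z l : ℂ) : Xf z l = cexp (-(I * z * l)) * cexp (conj (I * z * l)) := by
  rw [Xf, ← exp_add, map_mul, map_mul, conj_I]
  ring_nf

lemma hasFDerivAt_Xf (z l : ℂ) :
    HasFDerivAt (Xf z) (wirtingerCLM (-I * z * Xf z l) (-I * conj z * Xf z l)) l := by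
  have hX : Xf z = fun l => cexp (wirtingerCLM (-I * z) (-I * conj z) l) := by
    funext l
    rw [Xf, wirtingerCLM_apply]
    ring_nf
  rw [hX]
  refine ((wirtingerCLM _ _).hasFDerivAt.cexp).congr_fderiv <|
    ContinuousLinearMap.ext fun δ => ?_
  simp only [FunLike.coe_smul, Pi.smul_apply, wirtingerCLM_apply, smul_eq_mul]
  ring

lemma hasFDerivAt_exp_mul_EiSum {z l : ℂ} (hz : z ≠ 0) (hl : l ≠ 0) :
    HasFDerivAt (fun l => cexp (-(I * z * l)) * EiSum (I * z * l))
      (wirtingerCLM (l⁻¹ - I * z * cexp (-(I * z * l)) * EiSum (I * z * l)) (Xf z l / conj l))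
      l := by
  have hz' : conj z ≠ 0 := by simpa using hz
  have hl' : conj l ≠ 0 := by simpa using hl
  have hexp := (((hasDerivAt_id' l).const_mul (I * z)).neg.cexp).hasFDerivAt_wirtingerCLM
  have hEiSum := (hasFDerivAt_EiSum (w := I * z * l) (by simp [hz, hl])).comp_const_mul_wirtingerCLM
  refine (hexp.fun_mul hEiSum).congr_fderiv <| ContinuousLinearMap.ext fun δ => ?_
  simp only [FunLike.coe_add, FunLike.coe_smul, Pi.add_apply, Pi.smul_apply, wirtingerCLM_apply,
    smul_eq_mul, Pi.neg_apply, mul_one, Xf_eq_exp_mul_exp, map_mul, conj_I, exp_neg]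
  field_simp
  ring

lemma HasDerivAt.grE_comp {z l a b a' b' δ e : ℂ} {L : ℝ → ℂ} {s : ℝ}
    (hL : HasDerivAt L δ s) (hLs : L s = l)
    (hK : HasFDerivAt (fun l => cexp (-(I * z * l)) * EiSum (I * z * l)) (wirtingerCLM a b) l)
    (hX : HasFDerivAt (Xf z) (wirtingerCLM a' b') l) (hG : HasDerivAt (fun s => Gf (L s)) e s) :
    HasDerivAt (fun s => grE z (L s))
      (1 / (16 * π) * (wirtingerCLM a b δ - (wirtingerCLM a' b' δ * Gf l + (1 + Xf z l) * e)))
      s := by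
  subst hLs
  have h := ((hK.comp_hasDerivAt s hL).sub
    (((hX.comp_hasDerivAt s hL).const_add 1).mul hG)).const_mul (1 / (16 * (π : ℂ)))
  refine h.congr_of_eventuallyEq (Filter.Eventually.of_forall fun s => ?_)
  simp only [grE, Function.comp, Pi.sub_apply, Pi.mul_apply, neg_mul]
  ring_nf

lemma dbar_grE {z l a b a' b' d1 d2 e1 e2 : ℂ}
    (hK : HasFDerivAt (fun l => cexp (-(I * z * l)) * EiSum (I * z * l)) (wirtingerCLM a b) l)
    (hX : HasFDerivAt (Xf z) (wirtingerCLM a' b') l)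
    (hd1 : HasDerivAt (fun s : ℝ => grE z ((s : ℂ) + l.im * I)) d1 l.re)
    (hd2 : HasDerivAt (fun s : ℝ => grE z ((l.re : ℂ) + (s : ℂ) * I)) d2 l.im)
    (he1 : HasDerivAt (fun s : ℝ => Gf ((s : ℂ) + l.im * I)) e1 l.re)
    (he2 : HasDerivAt (fun s : ℝ => Gf ((l.re : ℂ) + (s : ℂ) * I)) e2 l.im) :
    1 / 2 * (d1 + I * d2) =
      1 / (16 * π) * (b - b' * Gf l - (1 + Xf z l) * (1 / 2 * (e1 + I * e2))) := by
  have hH : HasDerivAt (fun s : ℝ => (s : ℂ) + l.im * I) 1 l.re :=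
    (hasDerivAt_id (l.re : ℂ)).comp_ofReal.add_const _
  have hV : HasDerivAt (fun s : ℝ => (l.re : ℂ) + s * I) I l.im := by
    simpa using ((hasDerivAt_id (l.im : ℂ)).comp_ofReal.mul_const I).const_add (l.re : ℂ)
  rw [hd1.unique (hH.grE_comp (re_add_im l) hK hX he1),
    hd2.unique (hV.grE_comp (re_add_im l) hK hX he2)]
  simp only [wirtingerCLM_apply, map_one, conj_I]
  linear_combination (1 / (16 * π) * (1 / 2) * (a - b - (a' - b') * Gf l)) * I_sq

theorem stmt11_general (z l d1 d2 e1 e2 : ℂ) (hl : l ≠ 0)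
    (h1 : offCut (Complex.I * l * z))
    (hd1 : HasDerivAt (fun s : ℝ => grE z ((s : ℂ) + l.im * Complex.I)) d1 l.re)
    (hd2 : HasDerivAt (fun s : ℝ => grE z ((l.re : ℂ) + (s : ℂ) * Complex.I)) d2 l.im)
    (he1 : HasDerivAt (fun s : ℝ => Gf ((s : ℂ) + l.im * Complex.I)) e1 l.re)
    (he2 : HasDerivAt (fun s : ℝ => Gf ((l.re : ℂ) + (s : ℂ) * Complex.I)) e2 l.im) :
    (1 / 2) * (d1 + Complex.I * d2) =
      (1 / (16 * (Real.pi : ℂ) * (starRingEnd ℂ) l)) * Xf z l +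
        (Complex.I * (starRingEnd ℂ) z / (16 * (Real.pi : ℂ))) * Xf z l * Gf l -
        (1 / (16 * (Real.pi : ℂ))) * (1 + Xf z l) * ((1 / 2) * (e1 + Complex.I * e2)) := by
  have hz : z ≠ 0 := by
    rintro rfl
    exact h1 (by simp)
  have hl' : conj l ≠ 0 := by simpa using hl
  rw [dbar_grE (hasFDerivAt_exp_mul_EiSum hz hl) (hasFDerivAt_Xf z l) hd1 hd2 he1 he2]
  field_simp
  ring

/-- The ∂̄-equation for g^r in λ: if d1, d2 are the partial derivatives of
λ ↦ g^r(z,λ) in λ₁, λ₂ and e1, e2 those of 𝒢, then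
(1/2)(d1 + i·d2) = (1/(16πλ̄))X + (iz̄/(16π))X𝒢 - (1/(16π))(1+X)·(1/2)(e1 + i·e2). -/
theorem stmt11 (z l d1 d2 e1 e2 : ℂ) (hl : l ≠ 0)
    (h1 : offCut (Complex.I * l * z))
    (h2 : offCut (-Complex.I * (starRingEnd ℂ) l * (starRingEnd ℂ) z))
    (h3 : offCut (Complex.I * l))
    (h4 : offCut (-Complex.I * (starRingEnd ℂ) l))
    (hd1 : HasDerivAt (fun s : ℝ => grE z ((s : ℂ) + l.im * Complex.I)) d1 l.re)
    (hd2 : HasDerivAt (fun s : ℝ => grE z ((l.re : ℂ) + (s : ℂ) * Complex.I)) d2 l.im)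
    (he1 : HasDerivAt (fun s : ℝ => Gf ((s : ℂ) + l.im * Complex.I)) e1 l.re)
    (he2 : HasDerivAt (fun s : ℝ => Gf ((l.re : ℂ) + (s : ℂ) * Complex.I)) e2 l.im) :
    (1 / 2) * (d1 + Complex.I * d2) =
      (1 / (16 * (Real.pi : ℂ) * (starRingEnd ℂ) l)) * Xf z l +
        (Complex.I * (starRingEnd ℂ) z / (16 * (Real.pi : ℂ))) * Xf z l * Gf l -
        (1 / (16 * (Real.pi : ℂ))) * (1 + Xf z l) * ((1 / 2) * (e1 + Complex.I * e2)) :=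
  stmt11_general z l d1 d2 e1 e2 hl h1 hd1 hd2 he1 he2
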